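/- The configuration {(0,0),(2,0)}, consisting of two cells in the same row separated by one empty cell, is strongly brodable, although it is not 8-connected. -/

import Mathlib

/-- Two vertices of `ℤ²` are adjacent if their Euclidean distance is `1`. -/
def Adj (u v : ℤ × ℤ) : Prop := (u.1 - v.1) ^ 2 + (u.2 - v.2) ^ 2 = 1

/-- The inferior diagonal of the cell `(a, b)`: the unordered pair `{(a,b), (a+1,b+1)}`. -/
def infDiag (c : ℤ × ℤ) : Sym2 (ℤ × ℤ) := s(c, (c.1 + 1, c.2 + 1))

/-- The superior diagonal of the cell `(a, b)`: the unordered pair `{(a,b+1), (a+1,b)}`. -/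
def supDiag (c : ℤ × ℤ) : Sym2 (ℤ × ℤ) := s((c.1, c.2 + 1), (c.1 + 1, c.2))

/-- The unordered pair underlying an ordered pair of vertices. -/
def diagOf (e : (ℤ × ℤ) × (ℤ × ℤ)) : Sym2 (ℤ × ℤ) := s(e.1, e.2)

/-- `d 0, d 1, …, d (2n - 1)` (with `n = C.card`) is an embroidery of the
configuration `C`. -/
def IsEmbroidery (C : Finset (ℤ × ℤ)) (d : ℕ → (ℤ × ℤ) × (ℤ × ℤ)) : Prop :=
  (∀ i < 2 * C.card, ∃ c ∈ C, diagOf (d i) = infDiag c ∨ diagOf (d i) = supDiag c) ∧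
  (∀ c ∈ C, ∃! i, i < 2 * C.card ∧ diagOf (d i) = infDiag c) ∧
  (∀ c ∈ C, ∃! i, i < 2 * C.card ∧ diagOf (d i) = supDiag c) ∧
  (∀ c ∈ C, ∀ i j, i < 2 * C.card → j < 2 * C.card →
    diagOf (d i) = infDiag c → diagOf (d j) = supDiag c → i < j) ∧
  (∀ i, i + 1 < 2 * C.card → Adj (d i).2 (d (i + 1)).1)

/-- A closed embroidery: moreover the end of the last diagonal is adjacent to the
start of the first one. -/
def IsClosedEmbroidery (C : Finset (ℤ × ℤ)) (d : ℕ → (ℤ × ℤ) × (ℤ × ℤ)) : Prop :=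
  IsEmbroidery C d ∧ Adj (d (2 * C.card - 1)).2 (d 0).1

/-- A configuration is brodable if it admits an embroidery. -/
def Brodable (C : Finset (ℤ × ℤ)) : Prop := ∃ d, IsEmbroidery C d

/-- A configuration is strongly brodable if it admits a closed embroidery. -/
def StronglyBrodable (C : Finset (ℤ × ℤ)) : Prop := ∃ d, IsClosedEmbroidery C d

/-- Two cells are 8-adjacent if they are distinct and differ by `(ε, δ)` with
`ε, δ ∈ {-1, 0, 1}`. -/
def EightAdj (p q : ℤ × ℤ) : Prop :=
  p ≠ q ∧ |p.1 - q.1| ≤ 1 ∧ |p.2 - q.2| ≤ 1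

/-- A configuration is 8-connected if any two of its cells are joined by a chain of
cells of the configuration in which consecutive cells are 8-adjacent. -/
def EightConnected (C : Finset (ℤ × ℤ)) : Prop :=
  ∀ p ∈ C, ∀ q ∈ C,
    Relation.ReflTransGen (fun a b => a ∈ C ∧ b ∈ C ∧ EightAdj a b) p q

/-!
Every clause of an embroidery is a bounded quantification over indices and cells, so being a
(closed) embroidery is decidable and an explicit closed embroidery is checked by evaluation:
stitch both diagonals of `(0,0)`, cross from `(1,0)` to `(2,0)`, stitch both diagonals of
`(2,0)` and close from `(2,1)` back to `(1,1)`. The cell `(0,0)` has no 8-neighbour in the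
configuration, so no chain leaves it.
-/

instance : DecidableRel Adj := fun _ _ => inferInstanceAs (Decidable (_ = _))

theorem existsUnique_lt_iff_card_filter_range {m : ℕ} {P : ℕ → Prop} [DecidablePred P] :
    (∃! i, i < m ∧ P i) ↔ ((Finset.range m).filter P).card = 1 := by
  simp only [Finset.card_eq_one, Finset.eq_singleton_iff_unique_mem, Finset.mem_filter,
    Finset.mem_range, ExistsUnique]

theorem isEmbroidery_iff {C : Finset (ℤ × ℤ)} {d : ℕ → (ℤ × ℤ) × (ℤ × ℤ)} :
    IsEmbroidery C d ↔
      (∀ i < 2 * C.card, ∃ c ∈ C, diagOf (d i) = infDiag c ∨ diagOf (d i) = supDiag c) ∧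
      (∀ c ∈ C, ((Finset.range (2 * C.card)).filter (fun i => diagOf (d i) = infDiag c)).card = 1) ∧
      (∀ c ∈ C, ((Finset.range (2 * C.card)).filter (fun i => diagOf (d i) = supDiag c)).card = 1) ∧
      (∀ c ∈ C, ∀ i ∈ Finset.range (2 * C.card), ∀ j ∈ Finset.range (2 * C.card),
        diagOf (d i) = infDiag c → diagOf (d j) = supDiag c → i < j) ∧
      (∀ i < 2 * C.card - 1, Adj (d i).2 (d (i + 1)).1) := by
  simp only [IsEmbroidery, ← existsUnique_lt_iff_card_filter_range]
  refine and_congr_right' (and_congr_right' (and_congr_right' (and_congr ?_ ?_)))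
  · refine forall₂_congr fun c _ => ?_
    simp only [Finset.mem_range]
    exact ⟨fun h i hi j hj => h i j hi hj, fun h i j hi hj => h i hi j hj⟩
  · exact forall_congr' fun i => imp_congr_left (by omega)

instance {C : Finset (ℤ × ℤ)} {d : ℕ → (ℤ × ℤ) × (ℤ × ℤ)} : Decidable (IsEmbroidery C d) :=
  decidable_of_iff _ isEmbroidery_iff.symm

instance {C : Finset (ℤ × ℤ)} {d : ℕ → (ℤ × ℤ) × (ℤ × ℤ)} : Decidable (IsClosedEmbroidery C d) :=
  inferInstanceAs (Decidable (_ ∧ _))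

theorem not_eightConnected_of_isolated {C : Finset (ℤ × ℤ)} {p q : ℤ × ℤ} (hp : p ∈ C)
    (hq : q ∈ C) (hpq : p ≠ q) (hiso : ∀ r ∈ C, ¬ EightAdj p r) : ¬ EightConnected C := by
  intro hC
  rcases (hC p hp q hq).cases_head with rfl | ⟨r, ⟨-, hr, hadj⟩, -⟩
  · exact hpq rfl
  · exact hiso r hr hadj

def twoSeparatedCellsEmbroidery : ℕ → (ℤ × ℤ) × (ℤ × ℤ)
  | 0 => ((1, 1), (0, 0))
  | 1 => ((0, 1), (1, 0))
  | 2 => ((2, 0), (3, 1))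
  | _ => ((3, 0), (2, 1))

/-- The configuration `{(0,0), (2,0)}` is strongly brodable although not 8-connected. -/
theorem two_separated_cells :
    StronglyBrodable ({((0 : ℤ), (0 : ℤ)), ((2 : ℤ), (0 : ℤ))} : Finset (ℤ × ℤ)) ∧
    ¬ EightConnected ({((0 : ℤ), (0 : ℤ)), ((2 : ℤ), (0 : ℤ))} : Finset (ℤ × ℤ)) := by
  refine ⟨⟨twoSeparatedCellsEmbroidery, by decide⟩, ?_⟩
  refine not_eightConnected_of_isolated (p := (0, 0)) (q := (2, 0)) (by decide) (by decide)
    (by decide) ?_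
  simp [EightAdj]
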